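/- Let G be a compact Hausdorff topological group equipped with its normalized Haar probability measure μ, and let (V, ρ) be an irreducible continuous unitary representation of G with character χ_ρ. Then χ_ρ ∗ χ_ρ = χ_ρ / dim V, i.e. for every g ∈ G, ∫_G χ_ρ(g h) · χ_ρ(h⁻¹) dμ(h) = χ_ρ(g) / dim V. -/

import Mathlib

/-!
For an operator `A`, the Haar average `∫ ρ(h) A ρ(h)⁻¹ dμ(h)` commutes with every `ρ(k)` and has
the trace of `A`, so by Schur's lemma it is `(tr A / dim V) • 1`. Writing
`χ(gh) χ(h⁻¹) = ∑ i j, tr (ρ(g) ρ(h) E_ij ρ(h)⁻¹ E_ji)` with the matrix units `E_ij` of a basis and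
averaging over `h` turns the integral into `∑ i j, tr E_ij · tr (ρ(g) E_ji) / dim V = χ(g) / dim V`.
-/

open MeasureTheory

namespace Module.End

variable {K V : Type*} [Field K] [AddCommGroup V] [Module K V] [FiniteDimensional K V]
  [Nontrivial V] [IsAlgClosed K] {ι : Type*} (ρ : ι → End K V)

theorem exists_eq_smul_one_of_forall_commute
    (hρ : ∀ U : Submodule K V, (∀ (i : ι) (v : V), v ∈ U → ρ i v ∈ U) → U = ⊥ ∨ U = ⊤)
    {S : End K V} (hS : ∀ i, Commute (ρ i) S) : ∃ c : K, S = c • 1 := by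
  obtain ⟨c, hc⟩ := exists_eigenvalue S
  have hinv : ∀ (i : ι) (v : V), v ∈ S.eigenspace c → ρ i v ∈ S.eigenspace c :=
    fun i _ hv ↦ mapsTo_genEigenspace_of_comm (hS i).symm c 1 hv
  have htop : S.eigenspace c = ⊤ := (hρ _ hinv).resolve_left hc
  refine ⟨c, LinearMap.ext fun v ↦ ?_⟩
  simpa using mem_eigenspace_iff.mp (htop ▸ Submodule.mem_top : v ∈ S.eigenspace c)

theorem eq_trace_div_finrank_smul_one_of_forall_commute [CharZero K]
    (hρ : ∀ U : Submodule K V, (∀ (i : ι) (v : V), v ∈ U → ρ i v ∈ U) → U = ⊥ ∨ U = ⊤)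
    {S : End K V} (hS : ∀ i, Commute (ρ i) S) :
    S = (LinearMap.trace K V S / finrank K V) • 1 := by
  obtain ⟨c, rfl⟩ := exists_eq_smul_one_of_forall_commute ρ hρ hS
  have hd : (finrank K V : K) ≠ 0 := Nat.cast_ne_zero.mpr finrank_pos.ne'
  rw [map_smul, LinearMap.trace_one, smul_eq_mul, mul_div_cancel_right₀ _ hd]

end Module.End

namespace LinearMap

variable {R M : Type*} [CommRing R] [AddCommGroup M] [Module R M]

theorem mul_smulRight (X : Module.End R M) (f : M →ₗ[R] R) (x : M) :
    X * f.smulRight x = f.smulRight (X x) := by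
  ext; simp

variable {ι : Type*} [Fintype ι]

theorem trace_eq_sum_coord (b : Module.Basis ι R M) (f : Module.End R M) :
    trace R M f = ∑ i, b.coord i (f (b i)) := by
  classical
  rw [trace_eq_matrix_trace R b, Matrix.trace]
  simp [toMatrix_apply]

theorem trace_smulRight_of_basis (b : Module.Basis ι R M) (f : M →ₗ[R] R) (x : M) :
    trace R M (f.smulRight x) = f x := by
  have := Module.Free.of_basis b
  have := Module.Finite.of_basis b
  exact trace_smulRight f x

theorem trace_mul_trace_eq_sum (b : Module.Basis ι R M) (W Z : Module.End R M) :
    trace R M W * trace R M Z = ∑ i, ∑ j,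
      trace R M (W * (b.coord j).smulRight (b i) * Z * (b.coord i).smulRight (b j)) := by
  simp only [mul_assoc, mul_smulRight, trace_smulRight_of_basis b, smulRight_apply, map_smul,
    smul_eq_mul]
  rw [trace_eq_sum_coord b W, trace_eq_sum_coord b Z, Finset.sum_mul_sum]
  exact Finset.sum_congr rfl fun i _ ↦ Finset.sum_congr rfl fun j _ ↦ mul_comm _ _

theorem sum_trace_smulRight_mul_trace (b : Module.Basis ι R M) (X : Module.End R M) :
    ∑ i, ∑ j, trace R M ((b.coord j).smulRight (b i)) *
      trace R M (X * (b.coord i).smulRight (b j)) = trace R M X := by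
  classical
  simp [mul_smulRight, trace_smulRight_of_basis b, trace_eq_sum_coord b X, Finsupp.single_apply]

end LinearMap

section Trace

variable {X E : Type*} [MeasurableSpace X] {ν : Measure X} [NormedAddCommGroup E]
  [NormedSpace ℂ E] [FiniteDimensional ℂ E] {F : X → E →L[ℂ] E}

theorem MeasureTheory.Integrable.trace (hF : Integrable F ν) :
    Integrable (fun x ↦ LinearMap.trace ℂ E (F x : E →L[ℂ] E)) ν :=
  (LinearMap.trace ℂ E ∘ₗ ContinuousLinearMap.coeLM ℂ).toContinuousLinearMap.integrable_comp hF

theorem LinearMap.trace_integral (hF : Integrable F ν) :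
    trace ℂ E (∫ x, F x ∂ν : E →L[ℂ] E) = ∫ x, trace ℂ E (F x : E →L[ℂ] E) ∂ν :=
  ((trace ℂ E ∘ₗ ContinuousLinearMap.coeLM ℂ).toContinuousLinearMap.integral_comp_comm hF).symm

end Trace

section ConjAverage

variable {G : Type*} [Group G] [TopologicalSpace G] [MeasurableSpace G] (μ : Measure G)
  {E : Type*} [NormedAddCommGroup E] [NormedSpace ℂ E] (ρ : G →* (E →L[ℂ] E))

noncomputable def conjAverage (A : E →L[ℂ] E) : E →L[ℂ] E :=
  ∫ h, ρ h * A * ρ h⁻¹ ∂μ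

variable {μ ρ} [ContinuousInv G] [CompactSpace G] [OpensMeasurableSpace G]

theorem integrable_conj [IsFiniteMeasure μ] (hρ : Continuous ρ) (A : E →L[ℂ] E) :
    Integrable (fun h ↦ ρ h * A * ρ h⁻¹) μ :=
  ((hρ.mul continuous_const).mul (hρ.comp continuous_inv)).integrable_of_hasCompactSupport
    (.of_compactSpace _)

theorem commute_conjAverage [MeasurableMul G] [IsFiniteMeasure μ] [μ.IsMulLeftInvariant]
    (hρ : Continuous ρ) (A : E →L[ℂ] E) (k : G) :
    Commute (ρ k) (conjAverage μ ρ A) := by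
  have hshift : ∀ h, ρ k * (ρ h * A * ρ h⁻¹) = ρ (k * h) * A * ρ (k * h)⁻¹ * ρ k := fun h ↦ by
    simp only [mul_inv_rev, map_mul, mul_assoc, ← map_mul ρ k⁻¹ k, inv_mul_cancel, map_one,
      mul_one]
  rw [Commute, SemiconjBy, conjAverage, ← integral_const_mul_of_integrable (integrable_conj hρ A),
    ← integral_mul_const_of_integrable (integrable_conj hρ A)]
  simp_rw [hshift]
  exact integral_mul_left_eq_self (fun h ↦ ρ h * A * ρ h⁻¹ * ρ k) k

theorem trace_conjAverage [FiniteDimensional ℂ E] [IsProbabilityMeasure μ] (hρ : Continuous ρ)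
    (A : E →L[ℂ] E) :
    LinearMap.trace ℂ E (conjAverage μ ρ A : E →L[ℂ] E) = LinearMap.trace ℂ E A := by
  have hconj : ∀ h, LinearMap.trace ℂ E (ρ h * A * ρ h⁻¹ : E →L[ℂ] E) = LinearMap.trace ℂ E A :=
    fun h ↦ by
      rw [mul_assoc, ContinuousLinearMap.toLinearMap_mul, LinearMap.trace_mul_comm,
        ← ContinuousLinearMap.toLinearMap_mul, mul_assoc, ← map_mul, inv_mul_cancel, map_one,
        mul_one]
  rw [conjAverage, LinearMap.trace_integral (integrable_conj hρ A)]
  simp only [hconj, integral_const, probReal_univ, one_smul]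

end ConjAverage

section Orthogonality

variable {G : Type*} [Group G] [TopologicalSpace G] [ContinuousInv G] [CompactSpace G]
  [MeasurableSpace G] [OpensMeasurableSpace G] [MeasurableMul G]
  {μ : Measure G} [μ.IsMulLeftInvariant] [IsProbabilityMeasure μ]
  {E : Type*} [NormedAddCommGroup E] [NormedSpace ℂ E] [FiniteDimensional ℂ E] [Nontrivial E]
  {ρ : G →* (E →L[ℂ] E)}

theorem conjAverage_eq_smul_one (hρ : Continuous ρ)
    (hirr : ∀ U : Submodule ℂ E, (∀ (g : G) (v : E), v ∈ U → ρ g v ∈ U) → U = ⊥ ∨ U = ⊤)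
    (A : E →L[ℂ] E) :
    conjAverage μ ρ A = (LinearMap.trace ℂ E A / Module.finrank ℂ E) • 1 := by
  have h := Module.End.eq_trace_div_finrank_smul_one_of_forall_commute
    (fun g ↦ (ρ g : E →ₗ[ℂ] E)) hirr (S := conjAverage μ ρ A) fun g ↦
      (commute_conjAverage hρ A g).map ContinuousLinearMap.toLinearMapRingHom
  rw [trace_conjAverage hρ] at h
  exact ContinuousLinearMap.coe_injective (h.trans (by simp))

theorem integral_trace_mul_conj_mul (hρ : Continuous ρ)
    (hirr : ∀ U : Submodule ℂ E, (∀ (g : G) (v : E), v ∈ U → ρ g v ∈ U) → U = ⊥ ∨ U = ⊤)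
    (X A Y : E →L[ℂ] E) :
    ∫ h, LinearMap.trace ℂ E (X * (ρ h * A * ρ h⁻¹) * Y : E →L[ℂ] E) ∂μ
      = LinearMap.trace ℂ E A / Module.finrank ℂ E * LinearMap.trace ℂ E (X * Y : E →L[ℂ] E) := by
  have hint := integrable_conj (μ := μ) hρ A
  rw [← LinearMap.trace_integral ((hint.const_mul X).mul_const Y),
    integral_mul_const_of_integrable (hint.const_mul X), integral_const_mul_of_integrable hint,
    ← conjAverage, conjAverage_eq_smul_one hρ hirr]
  simp

theorem integral_trace_mul_trace_inv (hρ : Continuous ρ)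
    (hirr : ∀ U : Submodule ℂ E, (∀ (g : G) (v : E), v ∈ U → ρ g v ∈ U) → U = ⊥ ∨ U = ⊤)
    (g : G) :
    ∫ h, LinearMap.trace ℂ E (ρ (g * h) : E →L[ℂ] E) * LinearMap.trace ℂ E (ρ h⁻¹ : E →L[ℂ] E) ∂μ
      = LinearMap.trace ℂ E (ρ g : E →L[ℂ] E) / Module.finrank ℂ E := by
  let b := Module.finBasis ℂ E
  let e (i j : Fin (Module.finrank ℂ E)) : E →L[ℂ] E :=
    LinearMap.toContinuousLinearMap ((b.coord j).smulRight (b i))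
  have hexpand : ∀ h, LinearMap.trace ℂ E (ρ (g * h) : E →L[ℂ] E) *
      LinearMap.trace ℂ E (ρ h⁻¹ : E →L[ℂ] E) =
        ∑ i, ∑ j, LinearMap.trace ℂ E (ρ g * (ρ h * e i j * ρ h⁻¹) * e j i : E →L[ℂ] E) :=
    fun h ↦ by
      rw [map_mul, ContinuousLinearMap.toLinearMap_mul, LinearMap.trace_mul_trace_eq_sum b]
      simp [e, mul_assoc]
  have hint : ∀ i j, Integrable
      (fun h ↦ LinearMap.trace ℂ E (ρ g * (ρ h * e i j * ρ h⁻¹) * e j i : E →L[ℂ] E)) μ :=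
    fun i j ↦ (((integrable_conj hρ (e i j)).const_mul (ρ g)).mul_const (e j i)).trace
  simp_rw [hexpand]
  rw [integral_finsetSum _ fun i _ ↦ integrable_finsetSum _ fun j _ ↦ hint i j]
  simp_rw [integral_finsetSum _ fun j _ ↦ hint _ j, integral_trace_mul_conj_mul hρ hirr]
  rw [← LinearMap.sum_trace_smulRight_mul_trace b (ρ g : E →ₗ[ℂ] E)]
  simp only [e, LinearMap.coe_toContinuousLinearMap, ContinuousLinearMap.toLinearMap_mul,
    Finset.sum_div, div_mul_eq_mul_div]

end Orthogonality

theorem character_convolution_same_general {G : Type*} [Group G] [TopologicalSpace G]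
    [IsTopologicalGroup G] [CompactSpace G]
    [MeasurableSpace G] [BorelSpace G]
    (μ : Measure G) [μ.IsHaarMeasure] [IsProbabilityMeasure μ]
    {V : Type*} [NormedAddCommGroup V] [InnerProductSpace ℂ V]
    [FiniteDimensional ℂ V] [Nontrivial V]
    (ρ : G →* (V →ₗ[ℂ] V))
    (hρ_cont : ∀ v : V, Continuous fun g : G => ρ g v)
    (hρ_irr : ∀ U : Submodule ℂ V,
      (∀ (g : G) (v : V), v ∈ U → ρ g v ∈ U) → U = ⊥ ∨ U = ⊤)
    (g : G) :
    ∫ h, LinearMap.trace ℂ V (ρ (g * h)) * LinearMap.trace ℂ V (ρ h⁻¹) ∂μ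
      = LinearMap.trace ℂ V (ρ g) / (Module.finrank ℂ V : ℂ) := by
  let ρL : G →* (V →L[ℂ] V) := (Module.End.toContinuousLinearMap (𝕜 := ℂ) V).toMonoidHom.comp ρ
  exact integral_trace_mul_trace_inv (ρ := ρL) (continuous_clm_apply.mpr hρ_cont) hρ_irr g

/-- **Characters are convolution idempotents (up to normalization).**
For an irreducible continuous unitary representation `ρ` of a compact Hausdorff
group `G` with character `χ_ρ(g) = tr(ρ(g))`, one has
`(χ_ρ ∗ χ_ρ)(g) = ∫ χ_ρ(g h) χ_ρ(h⁻¹) dμ(h) = χ_ρ(g) / dim V` for every `g`. -/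
theorem character_convolution_same {G : Type*} [Group G] [TopologicalSpace G]
    [IsTopologicalGroup G] [CompactSpace G] [T2Space G]
    [MeasurableSpace G] [BorelSpace G]
    (μ : Measure G) [μ.IsHaarMeasure] [IsProbabilityMeasure μ]
    {V : Type*} [NormedAddCommGroup V] [InnerProductSpace ℂ V]
    [FiniteDimensional ℂ V] [Nontrivial V]
    (ρ : G →* (V →ₗ[ℂ] V))
    (hρ_unit : ∀ (g : G) (u v : V), (inner ℂ (ρ g u) (ρ g v) : ℂ) = inner ℂ u v)
    (hρ_cont : ∀ v : V, Continuous fun g : G => ρ g v)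
    (hρ_irr : ∀ U : Submodule ℂ V,
      (∀ (g : G) (v : V), v ∈ U → ρ g v ∈ U) → U = ⊥ ∨ U = ⊤)
    (g : G) :
    ∫ h, LinearMap.trace ℂ V (ρ (g * h)) * LinearMap.trace ℂ V (ρ h⁻¹) ∂μ
      = LinearMap.trace ℂ V (ρ g) / (Module.finrank ℂ V : ℂ) :=
  character_convolution_same_general μ ρ hρ_cont hρ_irr g
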